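/- arXiv:1505.00543 — 2 statements merged into one kernel-verified Lean document; each statement's English description precedes it below -/
import Mathlib

section
/- (Comparison principle for graphical mean curvature flow on bounded domains.) Let n ≥ 1, let Ω ⊆ ℝⁿ be a bounded open set, T > 0, and let f, g : [0,T] × cl(Ω) → ℝ be continuous functions whose restrictions to (0,T] × Ω are twice continuously differentiable in x, once continuously differentiable in t, and satisfy the graphical mean curvature flow equation there. Suppose f(0,x) ≤ g(0,x) for all x ∈ cl(Ω) and f(t,x) ≤ g(t,x) for all t ∈ [0,T] and x ∈ ∂Ω. Then f(t,x) ≤ g(t,x) for all (t,x) ∈ [0,T] × cl(Ω). -/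
/-!
Fix `ε > 0`, `t₁ < T` and maximise `f - g - ε t` over the compact set `[0, t₁] × cl Ω`. If the
maximum were positive, the initial and boundary conditions would put it at a point `(t₀, x₀)`
with `t₀ > 0` and `x₀ ∈ Ω`. There `∂ₜ(f - g) ≥ ε`, while `Df = Dg` and `D²(f - g) ≤ 0`; as the
coefficient matrix `I - p pᵀ / (1 + |p|²)` of the equation is positive semidefinite, Schur's
product theorem gives `mcfRHS (f t₀) x₀ ≤ mcfRHS (g t₀) x₀`, contradicting the equation.
So `f - g ≤ ε t` below `T`; let `ε → 0` and reach `t = T` by continuity.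
-/

open Metric Set MeasureTheory

/-- Partial derivative `∂ᵢ g (x)`. -/
noncomputable def pd {n : ℕ} (g : EuclideanSpace ℝ (Fin n) → ℝ) (x : EuclideanSpace ℝ (Fin n))
    (i : Fin n) : ℝ :=
  fderiv ℝ g x (EuclideanSpace.single i 1)

/-- Second partial derivative `∂ᵢ∂ⱼ g (x)`. -/
noncomputable def pd2 {n : ℕ} (g : EuclideanSpace ℝ (Fin n) → ℝ) (x : EuclideanSpace ℝ (Fin n))
    (i j : Fin n) : ℝ :=
  fderiv ℝ (fun y => pd g y j) x (EuclideanSpace.single i 1)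

/-- Squared Euclidean norm `|Dg(x)|²` of the spatial gradient. -/
noncomputable def gradNormSq {n : ℕ} (g : EuclideanSpace ℝ (Fin n) → ℝ)
    (x : EuclideanSpace ℝ (Fin n)) : ℝ :=
  ∑ i, (pd g x i) ^ 2

/-- Euclidean norm `|Dg(x)|` of the spatial gradient. -/
noncomputable def gradNorm {n : ℕ} (g : EuclideanSpace ℝ (Fin n) → ℝ)
    (x : EuclideanSpace ℝ (Fin n)) : ℝ :=
  Real.sqrt (gradNormSq g x)

/-- Frobenius norm `|D²g(x)|` of the spatial Hessian. -/
noncomputable def hessNorm {n : ℕ} (g : EuclideanSpace ℝ (Fin n) → ℝ)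
    (x : EuclideanSpace ℝ (Fin n)) : ℝ :=
  Real.sqrt (∑ i, ∑ j, (pd2 g x i j) ^ 2)

/-- Right-hand side of the graphical mean curvature flow equation:
`∑ᵢⱼ (δᵢⱼ − ∂ᵢg ∂ⱼg / (1+|Dg|²)) ∂ᵢ∂ⱼ g`. -/
noncomputable def mcfRHS {n : ℕ} (g : EuclideanSpace ℝ (Fin n) → ℝ)
    (x : EuclideanSpace ℝ (Fin n)) : ℝ :=
  ∑ i, ∑ j,
    ((if i = j then (1 : ℝ) else 0) - pd g x i * pd g x j / (1 + gradNormSq g x)) * pd2 g x i j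

/-- `f` is a (smooth) graphical mean curvature flow on `I × U`. -/
def IsGMCF {n : ℕ} (I : Set ℝ) (U : Set (EuclideanSpace ℝ (Fin n)))
    (f : ℝ → EuclideanSpace ℝ (Fin n) → ℝ) : Prop :=
  ContDiffOn ℝ (⊤ : ℕ∞) (fun p : ℝ × EuclideanSpace ℝ (Fin n) => f p.1 p.2) (I ×ˢ U) ∧
  ∀ t ∈ I, ∀ x ∈ U, deriv (fun s => f s x) t = mcfRHS (f t) x

/-- Squared norm `|A|²(g,x)` of the second fundamental form of the graph of `g`
at `(x, g(x))`. -/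
noncomputable def secondFF2 {n : ℕ} (g : EuclideanSpace ℝ (Fin n) → ℝ)
    (x : EuclideanSpace ℝ (Fin n)) : ℝ :=
  ∑ i, ∑ j, ∑ k, ∑ l,
    ((if i = k then (1 : ℝ) else 0) - pd g x i * pd g x k / (1 + gradNormSq g x)) *
      ((if j = l then (1 : ℝ) else 0) - pd g x j * pd g x l / (1 + gradNormSq g x)) *
      (pd2 g x i j / Real.sqrt (1 + gradNormSq g x)) *
      (pd2 g x k l / Real.sqrt (1 + gradNormSq g x))

open Filter Topology Matrix

open scoped ComplexOrder in
theorem Matrix.PosSemidef.sum_hadamard_nonneg {ι 𝕜 : Type*} [Fintype ι] [RCLike 𝕜]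
    {A B : Matrix ι ι 𝕜} (hA : A.PosSemidef) (hB : B.PosSemidef) :
    0 ≤ ∑ i, ∑ j, A i j * B i j := by
  simpa [dotProduct, mulVec, Finset.mul_sum] using
    (hA.hadamard hB).dotProduct_mulVec_nonneg fun _ => 1

theorem Matrix.posSemidef_one_sub_smul_vecMulVec {ι : Type*} [Fintype ι] [DecidableEq ι]
    (p : ι → ℝ) : (1 - (1 + p ⬝ᵥ p)⁻¹ • vecMulVec p p).PosSemidef := by
  refine .of_dotProduct_mulVec_nonneg ?_ fun x => ?_
  · simp [IsHermitian, transpose_vecMulVec]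
  have hcs : (p ⬝ᵥ x) ^ 2 ≤ (p ⬝ᵥ p) * (x ⬝ᵥ x) := by
    simpa [dotProduct, sq] using Finset.sum_mul_sq_le_sq_mul_sq Finset.univ p x
  have hp : 0 ≤ p ⬝ᵥ p := Finset.sum_nonneg fun i _ => mul_self_nonneg (p i)
  have hx : 0 ≤ x ⬝ᵥ x := Finset.sum_nonneg fun i _ => mul_self_nonneg (x i)
  have hform : x ⬝ᵥ (1 - (1 + p ⬝ᵥ p)⁻¹ • vecMulVec p p) *ᵥ x
      = x ⬝ᵥ x - (p ⬝ᵥ x) ^ 2 / (1 + p ⬝ᵥ p) := by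
    simp [sub_mulVec, smul_mulVec, vecMulVec_mulVec, dotProduct_sub, dotProduct_smul,
      dotProduct_comm x p]
    ring
  rw [star_trivial, hform, sub_nonneg, div_le_iff₀ (by positivity)]
  nlinarith

theorem IsLocalMax.deriv_deriv_nonpos {f : ℝ → ℝ} {a : ℝ} (h : IsLocalMax f a)
    (hc : ContinuousAt f a) : deriv (deriv f) a ≤ 0 := by
  by_contra! hpos
  have hmin : IsLocalMin f a := isLocalMin_of_deriv_deriv_pos hpos h.deriv_eq_zero hc
  have hconst : f =ᶠ[𝓝 a] fun _ => f a := (h.and hmin).mono fun _ hx => le_antisymm hx.1 hx.2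
  have hzero : deriv (deriv f) a = 0 := by
    rw [hconst.deriv.deriv_eq]
    simp
  exact hpos.ne' hzero

theorem IsLocalMaxOn.deriv_nonneg_of_Iio {f : ℝ → ℝ} {b : ℝ} (h : IsLocalMaxOn f (Iio b) b)
    (hd : DifferentiableAt ℝ f b) : 0 ≤ deriv f b := by
  refine ge_of_tendsto ((hasDerivAt_iff_tendsto_slope.mp hd.hasDerivAt).mono_left
    (nhdsLT_le_nhdsNE b)) ?_
  filter_upwards [h, self_mem_nhdsWithin] with s hs (hsb : s < b)
  rw [slope_def_field]
  exact div_nonneg_of_nonpos (by linarith) (by linarith)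

section SecondDerivative

variable {E : Type*} [NormedAddCommGroup E] [NormedSpace ℝ E]

theorem deriv_deriv_comp_line {u : E → ℝ} {x : E} (v : E)
    (hd : ∀ᶠ y in 𝓝 x, DifferentiableAt ℝ u y) (h2 : DifferentiableAt ℝ (fderiv ℝ u) x) :
    deriv (deriv fun s : ℝ => u (x + s • v)) 0 = fderiv ℝ (fderiv ℝ u) x v v := by
  have hline : ∀ s : ℝ, HasDerivAt (fun s : ℝ => x + s • v) v s := fun s => by
    simpa using ((hasDerivAt_id s).smul_const v).const_add x
  have hcont : Tendsto (fun s : ℝ => x + s • v) (𝓝 0) (𝓝 x) := by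
    simpa using (hline 0).continuousAt.tendsto
  have hfirst :
      deriv (fun s : ℝ => u (x + s • v)) =ᶠ[𝓝 0] fun s => fderiv ℝ u (x + s • v) v := by
    filter_upwards [hcont.eventually hd] with s hs
    exact (hs.hasFDerivAt.comp_hasDerivAt s (hline s)).deriv
  have h2' : HasFDerivAt (fderiv ℝ u) (fderiv ℝ (fderiv ℝ u) x) (x + (0 : ℝ) • v) := by
    simpa using h2.hasFDerivAt
  rw [hfirst.deriv_eq]
  exact ((ContinuousLinearMap.apply ℝ ℝ v).hasFDerivAt.comp_hasDerivAt 0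
    (h2'.comp_hasDerivAt 0 (hline 0))).deriv

theorem IsLocalMax.fderiv_fderiv_apply_self_nonpos {u : E → ℝ} {x : E} (h : IsLocalMax u x)
    (hu : ContDiffAt ℝ 2 u x) (v : E) : fderiv ℝ (fderiv ℝ u) x v v ≤ 0 := by
  have hd : ∀ᶠ y in 𝓝 x, DifferentiableAt ℝ u y :=
    (hu.eventually (by simp)).mono fun y hy => hy.differentiableAt two_ne_zero
  have h2 : DifferentiableAt ℝ (fderiv ℝ u) x :=
    (hu.fderiv_right (m := 1) (by norm_num)).differentiableAt one_ne_zero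
  have hline : ContinuousAt (fun s : ℝ => x + s • v) 0 := by fun_prop
  have hx : x + (0 : ℝ) • v = x := by simp
  rw [← hx] at h hu
  rw [← deriv_deriv_comp_line v hd h2]
  exact (IsLocalMax.comp_continuous (g := fun s : ℝ => x + s • v) h hline).deriv_deriv_nonpos
    (ContinuousAt.comp (f := fun s : ℝ => x + s • v) hu.continuousAt hline)

end SecondDerivative

section PartialDerivatives

variable {n : ℕ}

theorem ContinuousLinearMap.apply_self_eq_sum_single
    (B : EuclideanSpace ℝ (Fin n) →L[ℝ] EuclideanSpace ℝ (Fin n) →L[ℝ] ℝ)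
    (v : EuclideanSpace ℝ (Fin n)) :
    B v v = ∑ i, v i * ∑ j, B (EuclideanSpace.single i 1) (EuclideanSpace.single j 1) * v j := by
  conv_lhs => rw [← (EuclideanSpace.basisFun (Fin n) ℝ).sum_repr v]
  simp only [EuclideanSpace.basisFun_repr, EuclideanSpace.basisFun_apply, map_sum, map_smul,
    FunLike.coe_sum, Finset.sum_apply, FunLike.coe_smul, Pi.smul_apply, smul_eq_mul,
    Finset.mul_sum]
  rw [Finset.sum_comm]
  exact Finset.sum_congr rfl fun i _ => Finset.sum_congr rfl fun j _ => by ring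

theorem pd2_eq_fderiv_fderiv {u : EuclideanSpace ℝ (Fin n) → ℝ} {x : EuclideanSpace ℝ (Fin n)}
    (h : DifferentiableAt ℝ (fderiv ℝ u) x) (i j : Fin n) :
    pd2 u x i j =
      fderiv ℝ (fderiv ℝ u) x (EuclideanSpace.single i 1) (EuclideanSpace.single j 1) := by
  have hpd : (fun y => pd u y j) =
      ContinuousLinearMap.apply ℝ ℝ (EuclideanSpace.single j 1) ∘ fderiv ℝ u := rfl
  rw [pd2, hpd, fderiv_comp x (ContinuousLinearMap.differentiableAt _) h]
  simp

theorem pd2_sub {f g : EuclideanSpace ℝ (Fin n) → ℝ} {x : EuclideanSpace ℝ (Fin n)}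
    (hf : ContDiffAt ℝ 2 f x) (hg : ContDiffAt ℝ 2 g x) (i j : Fin n) :
    pd2 (f - g) x i j = pd2 f x i j - pd2 g x i j := by
  have hD2 : ∀ {u : EuclideanSpace ℝ (Fin n) → ℝ}, ContDiffAt ℝ 2 u x →
      DifferentiableAt ℝ (fderiv ℝ u) x := fun hu =>
    (hu.fderiv_right (m := 1) (by norm_num)).differentiableAt one_ne_zero
  have hD : fderiv ℝ (f - g) =ᶠ[𝓝 x] fderiv ℝ f - fderiv ℝ g := by
    filter_upwards [hf.eventually (by simp), hg.eventually (by simp)] with y hfy hgy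
    exact fderiv_sub (hfy.differentiableAt two_ne_zero) (hgy.differentiableAt two_ne_zero)
  rw [pd2_eq_fderiv_fderiv (u := f - g) (hD2 (hf.sub hg)), hD.fderiv_eq,
    fderiv_sub (hD2 hf) (hD2 hg), pd2_eq_fderiv_fderiv (hD2 hf), pd2_eq_fderiv_fderiv (hD2 hg)]
  rfl

theorem pd_eq_of_isLocalMax_sub {f g : EuclideanSpace ℝ (Fin n) → ℝ}
    {x : EuclideanSpace ℝ (Fin n)} (hf : DifferentiableAt ℝ f x) (hg : DifferentiableAt ℝ g x)
    (h : IsLocalMax (f - g) x) : pd f x = pd g x := by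
  have hD := h.fderiv_eq_zero
  rw [fderiv_sub hf hg, sub_eq_zero] at hD
  ext i
  simp [pd, hD]

theorem posSemidef_neg_pd2_of_isLocalMax {u : EuclideanSpace ℝ (Fin n) → ℝ}
    {x : EuclideanSpace ℝ (Fin n)} (h : IsLocalMax u x) (hu : ContDiffAt ℝ 2 u x) :
    (-Matrix.of (pd2 u x)).PosSemidef := by
  have h2 : DifferentiableAt ℝ (fderiv ℝ u) x :=
    (hu.fderiv_right (m := 1) (by norm_num)).differentiableAt one_ne_zero
  refine .of_dotProduct_mulVec_nonneg ?_ fun v => ?_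
  · ext i j
    simp [pd2_eq_fderiv_fderiv h2, hu.isSymmSndFDerivAt (by simp) (EuclideanSpace.single i 1)]
  have hv := h.fderiv_fderiv_apply_self_nonpos hu (WithLp.toLp 2 v)
  rw [ContinuousLinearMap.apply_self_eq_sum_single] at hv
  simpa [dotProduct, mulVec, pd2_eq_fderiv_fderiv h2, Finset.sum_neg_distrib, mul_comm] using hv

theorem mcfRHS_le_of_isLocalMax_sub {f g : EuclideanSpace ℝ (Fin n) → ℝ}
    {x : EuclideanSpace ℝ (Fin n)} (hf : ContDiffAt ℝ 2 f x) (hg : ContDiffAt ℝ 2 g x)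
    (h : IsLocalMax (f - g) x) : mcfRHS f x ≤ mcfRHS g x := by
  have hpd := pd_eq_of_isLocalMax_sub (hf.differentiableAt two_ne_zero)
    (hg.differentiableAt two_ne_zero) h
  have hnonneg := (posSemidef_one_sub_smul_vecMulVec (pd f x)).sum_hadamard_nonneg
    (posSemidef_neg_pd2_of_isLocalMax h (hf.sub hg))
  have hgrad : pd f x ⬝ᵥ pd f x = gradNormSq f x := by simp [dotProduct, gradNormSq, sq]
  have hgradg : gradNormSq g x = gradNormSq f x := by simp [gradNormSq, hpd]
  have hsplit : mcfRHS f x - mcfRHS g x = -∑ i, ∑ j,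
      (1 - (1 + pd f x ⬝ᵥ pd f x)⁻¹ • vecMulVec (pd f x) (pd f x)) i j *
        (-of (pd2 (f - g) x)) i j := by
    simp only [mcfRHS, hgradg, ← hpd, ← Finset.sum_sub_distrib, ← Finset.sum_neg_distrib]
    refine Finset.sum_congr rfl fun i _ => Finset.sum_congr rfl fun j _ => ?_
    simp [Matrix.one_apply, vecMulVec_apply, hgrad, pd2_sub hf hg]
    ring
  linarith

end PartialDerivatives

structure IsClassicalMCF {n : ℕ} (T : ℝ) (Ω : Set (EuclideanSpace ℝ (Fin n)))
    (f : ℝ → EuclideanSpace ℝ (Fin n) → ℝ) : Prop where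
  contDiffOn_space : ∀ t ∈ Ioc 0 T, ContDiffOn ℝ 2 (f t) Ω
  contDiffOn_time : ∀ x ∈ Ω, ContDiffOn ℝ 1 (fun s => f s x) (Ioc 0 T)
  deriv_eq : ∀ t ∈ Ioc 0 T, ∀ x ∈ Ω, deriv (fun s => f s x) t = mcfRHS (f t) x

namespace IsClassicalMCF

variable {n : ℕ} {T ε t₀ : ℝ} {Ω : Set (EuclideanSpace ℝ (Fin n))}
  {f g : ℝ → EuclideanSpace ℝ (Fin n) → ℝ} {x₀ : EuclideanSpace ℝ (Fin n)}

theorem not_isMaxOn_sub_sub_mul (hf : IsClassicalMCF T Ω f) (hg : IsClassicalMCF T Ω g)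
    (hΩ : IsOpen Ω) (hε : 0 < ε) (ht₀ : t₀ ∈ Ioo 0 T) (hx₀ : x₀ ∈ Ω) :
    ¬IsMaxOn (fun p : ℝ × EuclideanSpace ℝ (Fin n) => f p.1 p.2 - g p.1 p.2 - ε * p.1)
      (Icc 0 t₀ ×ˢ Ω) (t₀, x₀) := by
  intro hmax
  have ht₀' : t₀ ∈ Ioc 0 T := Ioo_subset_Ioc_self ht₀
  have hspace : IsLocalMax (f t₀ - g t₀) x₀ := by
    filter_upwards [hΩ.mem_nhds hx₀] with y hy
    have := hmax (mk_mem_prod ⟨ht₀.1.le, le_rfl⟩ hy)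
    simp only [mem_ofPred_eq] at this
    simp only [Pi.sub_apply]
    linarith
  have hrhs := mcfRHS_le_of_isLocalMax_sub ((hf.contDiffOn_space t₀ ht₀').contDiffAt
    (hΩ.mem_nhds hx₀)) ((hg.contDiffOn_space t₀ ht₀').contDiffAt (hΩ.mem_nhds hx₀)) hspace
  have htime : IsLocalMaxOn (fun s => f s x₀ - g s x₀ - ε * s) (Iio t₀) t₀ := by
    filter_upwards [Ioo_mem_nhdsLT ht₀.1] with s hs
    exact hmax (mk_mem_prod (Ioo_subset_Icc_self hs) hx₀)
  have hIoc : Ioc 0 T ∈ 𝓝 t₀ := mem_of_superset (isOpen_Ioo.mem_nhds ht₀) Ioo_subset_Ioc_self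
  have hderiv : HasDerivAt (fun s => f s x₀ - g s x₀ - ε * s)
      (deriv (fun s => f s x₀) t₀ - deriv (fun s => g s x₀) t₀ - ε) t₀ := by
    have hdiff : ∀ {u : ℝ → EuclideanSpace ℝ (Fin n) → ℝ}, IsClassicalMCF T Ω u →
        HasDerivAt (fun s => u s x₀) (deriv (fun s => u s x₀) t₀) t₀ := fun hu =>
      (((hu.contDiffOn_time x₀ hx₀).contDiffAt hIoc).differentiableAt one_ne_zero).hasDerivAt
    exact ((hdiff hf).sub (hdiff hg)).sub (by simpa using (hasDerivAt_id t₀).const_mul ε)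
  have hpos := htime.deriv_nonneg_of_Iio hderiv.differentiableAt
  rw [hderiv.deriv, hf.deriv_eq t₀ ht₀' x₀ hx₀, hg.deriv_eq t₀ ht₀' x₀ hx₀] at hpos
  linarith

variable (hΩo : IsOpen Ω) (hf : IsClassicalMCF T Ω f) (hg : IsClassicalMCF T Ω g)
  (hfcont : ContinuousOn (fun p : ℝ × EuclideanSpace ℝ (Fin n) => f p.1 p.2)
    (Icc 0 T ×ˢ closure Ω))
  (hgcont : ContinuousOn (fun p : ℝ × EuclideanSpace ℝ (Fin n) => g p.1 p.2)
    (Icc 0 T ×ˢ closure Ω))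
  (h0 : ∀ x ∈ closure Ω, f 0 x ≤ g 0 x)
  (hbd : ∀ t ∈ Icc 0 T, ∀ x ∈ frontier Ω, f t x ≤ g t x)
include hΩo hf hg hfcont hgcont h0 hbd

theorem sub_le_mul (hΩb : Bornology.IsBounded Ω) (hε : 0 < ε) {t₁ : ℝ} (ht₁ : t₁ < T) :
    ∀ t ∈ Icc 0 t₁, ∀ x ∈ closure Ω, f t x - g t x ≤ ε * t := by
  by_contra! ⟨t, ht, x, hx, hlt⟩
  have hK : Icc 0 t₁ ×ˢ closure Ω ⊆ Icc 0 T ×ˢ closure Ω :=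
    prod_mono (Icc_subset_Icc_right ht₁.le) subset_rfl
  obtain ⟨⟨t₀, x₀⟩, ⟨ht₀, hx₀⟩, hmax⟩ := IsCompact.exists_isMaxOn
    (f := fun p : ℝ × EuclideanSpace ℝ (Fin n) => f p.1 p.2 - g p.1 p.2 - ε * p.1)
    (isCompact_Icc.prod hΩb.isCompact_closure) ⟨_, mk_mem_prod ht hx⟩
    (((hfcont.mono hK).sub (hgcont.mono hK)).sub (by fun_prop))
  have hpos : 0 < f t₀ x₀ - g t₀ x₀ - ε * t₀ := by
    have := hmax (mk_mem_prod ht hx)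
    simp only [mem_ofPred_eq] at this
    linarith
  have ht₀pos : 0 < t₀ := by
    refine ht₀.1.lt_of_ne fun h => ?_
    subst h
    linarith [h0 x₀ hx₀]
  have hx₀Ω : x₀ ∈ Ω := by
    by_contra hx₀Ω
    linarith [hbd t₀ ⟨ht₀.1, ht₀.2.trans ht₁.le⟩ x₀ (by rw [hΩo.frontier_eq]; exact ⟨hx₀, hx₀Ω⟩),
      mul_pos hε ht₀pos]
  exact hf.not_isMaxOn_sub_sub_mul hg hΩo hε ⟨ht₀pos, ht₀.2.trans_lt ht₁⟩ hx₀Ω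
    (hmax.on_subset (prod_mono (Icc_subset_Icc_right ht₀.2) subset_closure))

theorem le_of_mem_Ico (hΩb : Bornology.IsBounded Ω) {t : ℝ} (ht : t ∈ Ico 0 T)
    {x : EuclideanSpace ℝ (Fin n)} (hx : x ∈ closure Ω) : f t x ≤ g t x := by
  have hlim : Tendsto (fun ε : ℝ => ε * t) (𝓝[>] 0) (𝓝 0) := by
    simpa using ((continuous_mul_const t).tendsto 0).mono_left nhdsWithin_le_nhds
  refine sub_nonpos.mp (ge_of_tendsto hlim (eventually_nhdsWithin_of_forall fun ε hε => ?_))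
  exact sub_le_mul hΩo hf hg hfcont hgcont h0 hbd hΩb hε ht.2 t ⟨ht.1, le_rfl⟩ x hx

end IsClassicalMCF

theorem mcfComparisonPrinciple_general (n : ℕ) (Ω : Set (EuclideanSpace ℝ (Fin n)))
    (hΩo : IsOpen Ω) (hΩb : Bornology.IsBounded Ω) (T : ℝ) (hT : 0 < T)
    (f g : ℝ → EuclideanSpace ℝ (Fin n) → ℝ)
    (hfcont : ContinuousOn (fun p : ℝ × EuclideanSpace ℝ (Fin n) => f p.1 p.2)
      (Set.Icc 0 T ×ˢ closure Ω))
    (hgcont : ContinuousOn (fun p : ℝ × EuclideanSpace ℝ (Fin n) => g p.1 p.2)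
      (Set.Icc 0 T ×ˢ closure Ω))
    (hfx : ∀ t ∈ Set.Ioc 0 T, ContDiffOn ℝ 2 (f t) Ω)
    (hgx : ∀ t ∈ Set.Ioc 0 T, ContDiffOn ℝ 2 (g t) Ω)
    (hft : ∀ x ∈ Ω, ContDiffOn ℝ 1 (fun s => f s x) (Set.Ioc 0 T))
    (hgt : ∀ x ∈ Ω, ContDiffOn ℝ 1 (fun s => g s x) (Set.Ioc 0 T))
    (hfeq : ∀ t ∈ Set.Ioc 0 T, ∀ x ∈ Ω, deriv (fun s => f s x) t = mcfRHS (f t) x)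
    (hgeq : ∀ t ∈ Set.Ioc 0 T, ∀ x ∈ Ω, deriv (fun s => g s x) t = mcfRHS (g t) x)
    (h0 : ∀ x ∈ closure Ω, f 0 x ≤ g 0 x)
    (hbd : ∀ t ∈ Set.Icc 0 T, ∀ x ∈ frontier Ω, f t x ≤ g t x) :
    ∀ t ∈ Set.Icc 0 T, ∀ x ∈ closure Ω, f t x ≤ g t x := by
  have hf : IsClassicalMCF T Ω f := ⟨hfx, hft, hfeq⟩
  have hg : IsClassicalMCF T Ω g := ⟨hgx, hgt, hgeq⟩
  have hcl : closure (Ico 0 T ×ˢ closure Ω) = Icc 0 T ×ˢ closure Ω := by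
    rw [closure_prod_eq, closure_Ico hT.ne, closure_closure]
  intro t ht x hx
  refine le_on_closure (f := fun p : ℝ × EuclideanSpace ℝ (Fin n) => f p.1 p.2)
    (g := fun p => g p.1 p.2) (fun p hp => ?_) (hcl ▸ hfcont) (hcl ▸ hgcont)
    (hcl ▸ mk_mem_prod ht hx : (t, x) ∈ closure (Ico 0 T ×ˢ closure Ω))
  exact hf.le_of_mem_Ico hΩo hg hfcont hgcont h0 hbd hΩb hp.1 hp.2

/-- **Comparison principle** for graphical mean curvature flow on a bounded domain.
If `f, g` are continuous on `[0,T] × cl(Ω)`, solve the graphical mean curvature flow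
equation on `(0,T] × Ω` (being `C²` in space and `C¹` in time there), `f ≤ g` initially
and on the lateral boundary, then `f ≤ g` on all of `[0,T] × cl(Ω)`. -/
theorem mcfComparisonPrinciple (n : ℕ) (hn : 1 ≤ n) (Ω : Set (EuclideanSpace ℝ (Fin n)))
    (hΩo : IsOpen Ω) (hΩb : Bornology.IsBounded Ω) (T : ℝ) (hT : 0 < T)
    (f g : ℝ → EuclideanSpace ℝ (Fin n) → ℝ)
    (hfcont : ContinuousOn (fun p : ℝ × EuclideanSpace ℝ (Fin n) => f p.1 p.2)
      (Set.Icc 0 T ×ˢ closure Ω))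
    (hgcont : ContinuousOn (fun p : ℝ × EuclideanSpace ℝ (Fin n) => g p.1 p.2)
      (Set.Icc 0 T ×ˢ closure Ω))
    (hfx : ∀ t ∈ Set.Ioc 0 T, ContDiffOn ℝ 2 (f t) Ω)
    (hgx : ∀ t ∈ Set.Ioc 0 T, ContDiffOn ℝ 2 (g t) Ω)
    (hft : ∀ x ∈ Ω, ContDiffOn ℝ 1 (fun s => f s x) (Set.Ioc 0 T))
    (hgt : ∀ x ∈ Ω, ContDiffOn ℝ 1 (fun s => g s x) (Set.Ioc 0 T))
    (hfeq : ∀ t ∈ Set.Ioc 0 T, ∀ x ∈ Ω, deriv (fun s => f s x) t = mcfRHS (f t) x)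
    (hgeq : ∀ t ∈ Set.Ioc 0 T, ∀ x ∈ Ω, deriv (fun s => g s x) t = mcfRHS (g t) x)
    (h0 : ∀ x ∈ closure Ω, f 0 x ≤ g 0 x)
    (hbd : ∀ t ∈ Set.Icc 0 T, ∀ x ∈ frontier Ω, f t x ≤ g t x) :
    ∀ t ∈ Set.Icc 0 T, ∀ x ∈ closure Ω, f t x ≤ g t x :=
  mcfComparisonPrinciple_general n Ω hΩo hΩb T hT f g hfcont hgcont hfx hgx hft hgt hfeq hgeq h0 hbd
end

section
/- (Pointwise equivalence between the Hessian and the second fundamental form of a graph, used via (secderivativerema).) Let n ≥ 1, let U ⊆ ℝⁿ be open, let f : U → ℝ be twice differentiable at x ∈ U, let v := √(1+|Df(x)|²), let |D²f(x)| denote the Frobenius norm of the Hessian of f at x, and let |A|(f,x) := √(|A|²(f,x)) be the norm of the second fundamental form of the graph of f at (x,f(x)). Then v^{−3}·|D²f(x)| ≤ |A|(f,x) ≤ v^{−1}·|D²f(x)|; in particular |D²f(x)| ≤ (1+|Df(x)|²)^{3/2} · |A|(f,x). -/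
open Metric Set MeasureTheory

/-!
With `p = Df(x)`, `v² = 1 + |p|²` and `H = D²f(x)`, the inverse metric `g = I - v⁻² p pᵀ` has
eigenvalue `v⁻²` on `p` and `1` on `p^⊥`, i.e. `v⁻² I ≤ g ≤ I` in the Loewner order.
Since `|A|² = v⁻² ⟨vec H, (g ⊗ g) vec H⟩` and Kronecker products of positive semidefinite
matrices are positive semidefinite, `v⁻⁴ I ≤ g ⊗ g ≤ I`, hence
`v⁻⁶ |H|² ≤ |A|² ≤ v⁻² |H|²`.
-/

open Matrix
open scoped MatrixOrder Kronecker

namespace Matrix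

section LoewnerOrder

variable {𝕜 m n : Type*} [RCLike 𝕜]

open scoped ComplexOrder

theorem kronecker_le_kronecker [Finite m] [Finite n] {A B : Matrix m m 𝕜} {C D : Matrix n n 𝕜}
    (hA : 0 ≤ A) (hAB : A ≤ B) (hC : 0 ≤ C) (hCD : C ≤ D) : A ⊗ₖ C ≤ B ⊗ₖ D := by
  have h : B ⊗ₖ D - A ⊗ₖ C = (B - A) ⊗ₖ D + A ⊗ₖ (D - C) := by
    rw [sub_eq_iff_eq_add, add_assoc, ← kronecker_add, sub_add_cancel, ← add_kronecker,
      sub_add_cancel]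
  rw [le_iff, h]
  exact (hAB.kronecker (nonneg_iff_posSemidef.mp (hC.trans hCD))).add
    ((nonneg_iff_posSemidef.mp hA).kronecker hCD)

theorem star_dotProduct_mulVec_le [Fintype n] {A B : Matrix n n 𝕜} (h : A ≤ B) (x : n → 𝕜) :
    star x ⬝ᵥ (A *ᵥ x) ≤ star x ⬝ᵥ (B *ᵥ x) := by
  have := h.dotProduct_mulVec_nonneg x
  rwa [sub_mulVec, dotProduct_sub, sub_nonneg] at this

end LoewnerOrder

variable {n : Type*} [Fintype n]

theorem sq_dotProduct_le (p x : n → ℝ) : (p ⬝ᵥ x) ^ 2 ≤ (p ⬝ᵥ p) * (x ⬝ᵥ x) := by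
  simpa only [dotProduct, sq] using Finset.sum_mul_sq_le_sq_mul_sq Finset.univ p x

theorem dotProduct_self_nonneg (p : n → ℝ) : 0 ≤ p ⬝ᵥ p := by
  simpa using dotProduct_star_self_nonneg p

theorem one_add_dotProduct_self_pos (p : n → ℝ) : 0 < 1 + p ⬝ᵥ p :=
  add_pos_of_pos_of_nonneg one_pos (dotProduct_self_nonneg p)

theorem inv_one_add_dotProduct_self_nonneg (p : n → ℝ) : 0 ≤ (1 + p ⬝ᵥ p)⁻¹ :=
  inv_nonneg.mpr (one_add_dotProduct_self_pos p).le

variable [DecidableEq n]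

theorem posSemidef_dotProduct_self_smul_one_sub_vecMulVec (p : n → ℝ) :
    ((p ⬝ᵥ p) • (1 : Matrix n n ℝ) - vecMulVec p p).PosSemidef := by
  refine .of_dotProduct_mulVec_nonneg ?_ fun x => ?_
  · simp [IsHermitian, transpose_vecMulVec]
  · simp only [star_trivial, sub_mulVec, smul_mulVec, one_mulVec, vecMulVec_mulVec,
      dotProduct_sub, dotProduct_smul, smul_eq_mul, MulOpposite.smul_eq_mul_unop,
      MulOpposite.unop_op, dotProduct_comm x p]
    linarith [sq_dotProduct_le p x]

noncomputable def graphInvMetric (p : n → ℝ) : Matrix n n ℝ :=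
  1 - (1 + p ⬝ᵥ p)⁻¹ • vecMulVec p p

theorem graphInvMetric_apply (p : n → ℝ) (i j : n) :
    graphInvMetric p i j = (if i = j then 1 else 0) - p i * p j / (1 + p ⬝ᵥ p) := by
  simp [graphInvMetric, one_apply, vecMulVec_apply, div_eq_inv_mul]

theorem graphInvMetric_le_one (p : n → ℝ) : graphInvMetric p ≤ 1 := by
  rw [le_iff, graphInvMetric, sub_sub_cancel]
  exact (posSemidef_vecMulVec_self_star p).smul (inv_one_add_dotProduct_self_nonneg p)

theorem smul_one_le_graphInvMetric (p : n → ℝ) :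
    (1 + p ⬝ᵥ p)⁻¹ • (1 : Matrix n n ℝ) ≤ graphInvMetric p := by
  have h : graphInvMetric p - (1 + p ⬝ᵥ p)⁻¹ • 1 =
      (1 + p ⬝ᵥ p)⁻¹ • ((p ⬝ᵥ p) • (1 : Matrix n n ℝ) - vecMulVec p p) := by
    have hc : (1 + p ⬝ᵥ p)⁻¹ * (p ⬝ᵥ p) = 1 - (1 + p ⬝ᵥ p)⁻¹ := by
      have := (one_add_dotProduct_self_pos p).ne'
      field_simp
      ring
    rw [graphInvMetric, smul_sub, smul_smul, hc, sub_smul, one_smul]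
    abel
  rw [le_iff, h]
  exact (posSemidef_dotProduct_self_smul_one_sub_vecMulVec p).smul (inv_one_add_dotProduct_self_nonneg p)

theorem sq_smul_one_le_kronecker_graphInvMetric (p : n → ℝ) :
    ((1 + p ⬝ᵥ p)⁻¹ ^ 2) • (1 : Matrix (n × n) (n × n) ℝ) ≤
      graphInvMetric p ⊗ₖ graphInvMetric p := by
  have hc := smul_one_le_graphInvMetric p
  have hc₀ : (0 : Matrix n n ℝ) ≤ (1 + p ⬝ᵥ p)⁻¹ • 1 :=
    nonneg_iff_posSemidef.mpr (PosSemidef.one.smul (inv_one_add_dotProduct_self_nonneg p))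
  rw [sq, ← smul_smul, ← one_kronecker_one, ← smul_kronecker, ← kronecker_smul]
  exact kronecker_le_kronecker hc₀ hc hc₀ hc

theorem kronecker_graphInvMetric_le_one (p : n → ℝ) :
    graphInvMetric p ⊗ₖ graphInvMetric p ≤ 1 := by
  have hg₀ : (0 : Matrix n n ℝ) ≤ graphInvMetric p := (nonneg_iff_posSemidef.mpr
    (PosSemidef.one.smul (inv_one_add_dotProduct_self_nonneg p))).trans
    (smul_one_le_graphInvMetric p)
  rw [← one_kronecker_one]
  exact kronecker_le_kronecker hg₀ (graphInvMetric_le_one p) hg₀ (graphInvMetric_le_one p)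

noncomputable def graphSecondFFSq (p : n → ℝ) (H : Matrix n n ℝ) : ℝ :=
  ∑ i, ∑ j, ∑ k, ∑ l, graphInvMetric p i k * graphInvMetric p j l *
    (H i j / √(1 + p ⬝ᵥ p)) * (H k l / √(1 + p ⬝ᵥ p))

theorem graphSecondFFSq_eq_inv_mul_kronecker (p : n → ℝ) (H : Matrix n n ℝ) :
    graphSecondFFSq p H =
      (1 + p ⬝ᵥ p)⁻¹ * (vec H ⬝ᵥ (graphInvMetric p ⊗ₖ graphInvMetric p) *ᵥ vec H) := by
  have hsq : √(1 + p ⬝ᵥ p) ^ 2 = 1 + p ⬝ᵥ p :=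
    Real.sq_sqrt (one_add_dotProduct_self_pos p).le
  unfold graphSecondFFSq
  -- keeps `p ⬝ᵥ p` folded while the other dot products are expanded
  set d := 1 + p ⬝ᵥ p
  simp only [dotProduct, mulVec, Fintype.sum_prod_type, vec, kronecker_apply, Finset.mul_sum]
  rw [Finset.sum_comm]
  refine Finset.sum_congr rfl fun i _ => Finset.sum_congr rfl fun j _ => ?_
  rw [Finset.sum_comm]
  refine Finset.sum_congr rfl fun k _ => Finset.sum_congr rfl fun l _ => ?_
  field_simp
  rw [hsq]

theorem graphSecondFFSq_le (p : n → ℝ) (H : Matrix n n ℝ) :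
    graphSecondFFSq p H ≤ (1 + p ⬝ᵥ p)⁻¹ * (vec H ⬝ᵥ vec H) := by
  rw [graphSecondFFSq_eq_inv_mul_kronecker]
  refine mul_le_mul_of_nonneg_left ?_ (inv_one_add_dotProduct_self_nonneg p)
  simpa using star_dotProduct_mulVec_le (kronecker_graphInvMetric_le_one p) (vec H)

theorem inv_pow_three_mul_le_graphSecondFFSq (p : n → ℝ) (H : Matrix n n ℝ) :
    (1 + p ⬝ᵥ p)⁻¹ ^ 3 * (vec H ⬝ᵥ vec H) ≤ graphSecondFFSq p H := by
  rw [graphSecondFFSq_eq_inv_mul_kronecker, pow_succ', mul_assoc]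
  refine mul_le_mul_of_nonneg_left ?_ (inv_one_add_dotProduct_self_nonneg p)
  simpa [smul_mulVec] using
    star_dotProduct_mulVec_le (sq_smul_one_le_kronecker_graphInvMetric p) (vec H)

end Matrix

theorem gradNormSq_eq_dotProduct {n : ℕ} (g : EuclideanSpace ℝ (Fin n) → ℝ)
    (x : EuclideanSpace ℝ (Fin n)) : gradNormSq g x = pd g x ⬝ᵥ pd g x := by
  simp [gradNormSq, dotProduct, sq]

theorem secondFF2_eq_graphSecondFFSq {n : ℕ} (g : EuclideanSpace ℝ (Fin n) → ℝ)
    (x : EuclideanSpace ℝ (Fin n)) :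
    secondFF2 g x = graphSecondFFSq (pd g x) (.of (pd2 g x)) := by
  simp only [secondFF2, graphSecondFFSq, graphInvMetric_apply, gradNormSq_eq_dotProduct, of_apply]

theorem hessNorm_eq_sqrt_vec_dotProduct {n : ℕ} (g : EuclideanSpace ℝ (Fin n) → ℝ)
    (x : EuclideanSpace ℝ (Fin n)) :
    hessNorm g x = √(vec (.of (pd2 g x)) ⬝ᵥ vec (.of (pd2 g x))) := by
  simp only [hessNorm, dotProduct, vec, Fintype.sum_prod_type, of_apply, sq]
  rw [Finset.sum_comm]

theorem Real.sqrt_sq_mul {a : ℝ} (ha : 0 ≤ a) (b : ℝ) : √(a ^ 2 * b) = a * √b := by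
  rw [Real.sqrt_mul (sq_nonneg a), Real.sqrt_sq ha]

theorem hessianSecondFFComparison_general (n : ℕ) (f : EuclideanSpace ℝ (Fin n) → ℝ)
    (x : EuclideanSpace ℝ (Fin n)) :
    let v : ℝ := Real.sqrt (1 + gradNormSq f x)
    (v⁻¹ ^ 3 * hessNorm f x ≤ Real.sqrt (secondFF2 f x) ∧
      Real.sqrt (secondFF2 f x) ≤ v⁻¹ * hessNorm f x) ∧
    hessNorm f x ≤ v ^ 3 * Real.sqrt (secondFF2 f x) := by
  intro v
  have hp := one_add_dotProduct_self_pos (pd f x)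
  have hv : 0 < v := Real.sqrt_pos.mpr (gradNormSq_eq_dotProduct f x ▸ hp)
  have hc : (1 + pd f x ⬝ᵥ pd f x)⁻¹ = v⁻¹ ^ 2 := by
    rw [inv_pow, Real.sq_sqrt (gradNormSq_eq_dotProduct f x ▸ hp.le), gradNormSq_eq_dotProduct]
  have hv₀ : 0 ≤ v⁻¹ := (inv_pos.mpr hv).le
  rw [secondFF2_eq_graphSecondFFSq, hessNorm_eq_sqrt_vec_dotProduct]
  have hlower : v⁻¹ ^ 3 * √(vec (.of (pd2 f x)) ⬝ᵥ vec (.of (pd2 f x))) ≤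
      √(graphSecondFFSq (pd f x) (.of (pd2 f x))) := by
    rw [← Real.sqrt_sq_mul (pow_nonneg hv₀ 3), ← pow_mul, pow_mul', ← hc]
    exact Real.sqrt_le_sqrt (inv_pow_three_mul_le_graphSecondFFSq _ _)
  have hupper : √(graphSecondFFSq (pd f x) (.of (pd2 f x))) ≤
      v⁻¹ * √(vec (.of (pd2 f x)) ⬝ᵥ vec (.of (pd2 f x))) := by
    rw [← Real.sqrt_sq_mul hv₀, ← hc]
    exact Real.sqrt_le_sqrt (graphSecondFFSq_le _ _)
  refine ⟨⟨hlower, hupper⟩, ?_⟩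
  calc _ = v ^ 3 * (v⁻¹ ^ 3 * _) := by field_simp
    _ ≤ _ := by gcongr

/-- **Equivalence of the Hessian and the second fundamental form of a graph**
(used via `secderivativerema`). With `v = √(1+|Df(x)|²)`, the Frobenius norm of the
Hessian and the norm `|A|(f,x) = √(|A|²(f,x))` of the second fundamental form of the
graph of `f` at `(x,f(x))` satisfy
`v⁻³·|D²f(x)| ≤ |A|(f,x) ≤ v⁻¹·|D²f(x)|`; in particular
`|D²f(x)| ≤ (1+|Df(x)|²)^{3/2}·|A|(f,x) = v³·|A|(f,x)`. -/
theorem hessianSecondFFComparison (n : ℕ) (hn : 1 ≤ n) (U : Set (EuclideanSpace ℝ (Fin n)))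
    (hU : IsOpen U) (f : EuclideanSpace ℝ (Fin n) → ℝ) (x : EuclideanSpace ℝ (Fin n))
    (hx : x ∈ U) (hf : ContDiffAt ℝ 2 f x) :
    let v : ℝ := Real.sqrt (1 + gradNormSq f x)
    (v⁻¹ ^ 3 * hessNorm f x ≤ Real.sqrt (secondFF2 f x) ∧
      Real.sqrt (secondFF2 f x) ≤ v⁻¹ * hessNorm f x) ∧
    hessNorm f x ≤ v ^ 3 * Real.sqrt (secondFF2 f x) :=
  hessianSecondFFComparison_general n f x
end
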